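/- (Lemma 4.) Let b, c be even integers with 0 ≤ c < b. Let D be the (b-c)×(b-c) matrix over ℚ with rows and columns indexed by c ≤ i,j < b, whose (i,j) entry equals C(c - b/2 - 1/2, 2c-1-j) if i = c, and C(c - b/2 + 1/2, i-j+c) if c < i < b. Then det D = 0. -/

import Mathlib

open Finset

/-- Generalized binomial coefficient `C(x,k)`. -/
def gbinom (x : ℚ) (k : ℤ) : ℚ :=
  if 0 ≤ k then (∏ m ∈ Finset.range k.toNat, (x - m)) / (k.toNat.factorial : ℚ) else 0

/-- Shifted factorial `(a)_k` with integer index. -/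
def poch (a : ℚ) (k : ℤ) : ℚ :=
  if 0 ≤ k then ∏ m ∈ Finset.range k.toNat, (a + m)
  else 1 / ∏ m ∈ Finset.range (-k).toNat, (a - (m + 1))

/-- The matrix `M(x;b,c)`. -/
def Mmat (x : ℚ) (b c : ℕ) : Matrix (Fin (b + c)) (Fin (b + c)) ℚ := fun i j =>
  if (i : ℕ) < c then
    (if (j : ℕ) < b then gbinom (x + (j : ℕ)) ((i : ℕ) : ℤ)
     else gbinom (2 * x + (j : ℕ)) ((i : ℕ) : ℤ))
  else if (i : ℕ) < b then
    (if (j : ℕ) < c then 0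
     else if (j : ℕ) < b then gbinom (x + (j : ℕ)) ((i : ℕ) : ℤ)
     else gbinom (2 * x + (j : ℕ)) ((i : ℕ) : ℤ))
  else
    (if (j : ℕ) < c then 2 * gbinom (x + (j : ℕ)) (((i : ℕ) : ℤ) - (b : ℤ))
     else if (j : ℕ) < b then gbinom (x + (j : ℕ)) (((i : ℕ) : ℤ) - (b : ℤ))
     else 0)

/-- `Δ(x;b,c)`. -/
def Δdet (x : ℚ) (b c : ℕ) : ℚ := (Mmat x b c).det

/-- The matrix `M'(x;b,c)`; column index `j` of the paper is `c + j'`. -/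
def M'mat (x : ℚ) (b c : ℕ) : Matrix (Fin b) (Fin b) ℚ := fun i j =>
  if c + (j : ℕ) < b then
    gbinom (x + (c : ℕ)) (((i : ℕ) : ℤ) - ((c : ℤ) + (j : ℕ)) + (c : ℤ))
  else if (i : ℕ) < c then
    2 * gbinom (2 * x + (b : ℕ)) (((i : ℕ) : ℤ) - ((c : ℤ) + (j : ℕ)) + (b : ℤ))
  else
    gbinom (2 * x + (b : ℕ)) (((i : ℕ) : ℤ) - ((c : ℤ) + (j : ℕ)) + (b : ℤ))

/-- `Δ'(x;b,c)`. -/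
def Δ'det (x : ℚ) (b c : ℕ) : ℚ := (M'mat x b c).det

/-!
Let `a = b - c - 1`, `y = (b - 1) / 2` and `x = c - y`; the kernel vector is
`w j = C(a,j) C(y,j) / C(a+c,j)`. The sums `∑ⱼ w j C(x, K-j)` are the coefficients of
`₂F₁(-a, -y; -(a+c); -t) (1+t)^x`, which by Euler's transformation is
`₂F₁(-c, -(a+c-y); -(a+c); -t)`; its coefficients vanish for `c < K ≤ a + c`, which kills the
rows `i ≥ 1` (`K = c + i`). Coefficientwise, both sides satisfy the same first-order recurrence
in `K`, found by Zeilberger's algorithm. Since `C(x-1, k) = ∑ᵢ (-1)^(k-i) C(x, i)`, row `0` is an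
alternating partial sum of the second series, which vanishes by Chu–Vandermonde because
`a + c - y = y` and `c` is even.
-/

theorem gbinom_of_neg (x : ℚ) {k : ℤ} (hk : k < 0) : gbinom x k = 0 := by
  simp [gbinom, not_le.mpr hk]

theorem gbinom_natCast (x : ℚ) (k : ℕ) : gbinom x k = Ring.choose x k := by
  rw [Ring.choose_eq_smul, ← Polynomial.aeval_eq_smeval, Polynomial.aeval_def,
    ← Polynomial.eval_map, descPochhammer_map]
  simp [gbinom, descPochhammer_eval_eq_prod_range, div_eq_inv_mul]

theorem gbinom_zero (x : ℚ) : gbinom x 0 = 1 := by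
  simpa using gbinom_natCast x 0

theorem gbinom_natCast_natCast (n k : ℕ) : gbinom n k = n.choose k := by
  rw [gbinom_natCast, Ring.choose_natCast]

theorem add_one_mul_gbinom_add_one (x : ℚ) (k : ℤ) :
    (k + 1) * gbinom x (k + 1) = (x - k) * gbinom x k := by
  rcases lt_or_ge k 0 with hk | hk
  · rw [gbinom_of_neg x hk, mul_zero]
    rcases (show k = -1 ∨ k + 1 < 0 by omega) with rfl | hk'
    · norm_num
    · rw [gbinom_of_neg x hk', mul_zero]
  · lift k to ℕ using hk
    have h := Ring.choose_smul_choose x (Nat.le_add_right k 1)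
    rw [Nat.choose_succ_self_right, Nat.add_sub_cancel_left, Ring.choose_one_right,
      nsmul_eq_mul] at h
    rw [← Nat.cast_succ, gbinom_natCast, gbinom_natCast]
    push_cast at h ⊢
    rw [h, mul_comm]

theorem gbinom_add_one_add_one (x : ℚ) (k : ℤ) :
    gbinom (x + 1) (k + 1) = gbinom x k + gbinom x (k + 1) := by
  rcases lt_or_ge k 0 with hk | hk
  · rw [gbinom_of_neg x hk, zero_add]
    rcases (show k = -1 ∨ k + 1 < 0 by omega) with rfl | hk'
    · norm_num [gbinom_zero]
    · rw [gbinom_of_neg _ hk', gbinom_of_neg _ hk']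
  · lift k to ℕ using hk
    rw [← Nat.cast_succ, gbinom_natCast, gbinom_natCast, gbinom_natCast]
    exact Ring.choose_succ_succ x k

theorem gbinom_eq_neg_one_pow_mul (x : ℚ) (k : ℕ) :
    gbinom x k = (-1) ^ k * gbinom (k - 1 - x) k := by
  have h := Ring.choose_neg (-x) k
  rw [neg_neg, Units.smul_def, Int.coe_negOnePow_natCast, zsmul_eq_mul] at h
  rw [gbinom_natCast, gbinom_natCast, h, show -x + k - 1 = (k : ℚ) - 1 - x by ring]
  push_cast
  ring

theorem gbinom_add_eq_sum (s t : ℚ) (k : ℕ) :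
    gbinom (s + t) k = ∑ m ∈ range (k + 1), gbinom s m * gbinom t ((k - m : ℕ) : ℤ) := by
  simp only [gbinom_natCast, Ring.add_choose_eq k (Commute.all s t),
    Nat.sum_antidiagonal_eq_sum_range_succ (fun i j => Ring.choose s i * Ring.choose t j)]

theorem gbinom_sub_one_eq_sum (x : ℚ) (j n : ℕ) :
    gbinom (x - 1) ((n : ℤ) - 1 - j) =
      ∑ m ∈ range n, (-1) ^ (n + 1 + m) * gbinom x ((m : ℤ) - j) := by
  induction n with
  | zero => exact gbinom_of_neg _ (by omega)
  | succ n ih =>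
    have pascal := gbinom_add_one_add_one (x - 1) ((n : ℤ) - 1 - j)
    rw [sub_add_cancel, show (n : ℤ) - 1 - j + 1 = n - j by ring] at pascal
    have hprev : ∑ m ∈ range n, (-1 : ℚ) ^ (n + 1 + 1 + m) * gbinom x ((m : ℤ) - j) =
        -gbinom (x - 1) ((n : ℤ) - 1 - j) := by
      rw [ih, ← sum_neg_distrib]
      exact sum_congr rfl fun m _ => by ring
    rw [sum_range_succ, hprev, Even.neg_one_pow ⟨n + 1, by ring⟩, Nat.cast_succ,
      show (n : ℤ) + 1 - 1 - j = n - j by ring]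
    linear_combination -pascal

/-- For `a ≤ N`, `∑ₘ hypTerm a z N m * t ^ m = ₂F₁(-a, -z; -N; -t)`. -/
def hypTerm (a : ℕ) (z : ℚ) (N m : ℕ) : ℚ := a.choose m * gbinom z m / N.choose m

theorem hypTerm_zero (a : ℕ) (z : ℚ) (N : ℕ) : hypTerm a z N 0 = 1 := by
  simp [hypTerm, gbinom_zero]

theorem hypTerm_of_lt {a m : ℕ} (z : ℚ) (N : ℕ) (h : a < m) : hypTerm a z N m = 0 := by
  simp [hypTerm, Nat.choose_eq_zero_of_lt h]

theorem hypTerm_succ (a : ℕ) (z : ℚ) {N m : ℕ} (hm : m < N) :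
    (m + 1) * (N - m) * hypTerm a z N (m + 1) = (a - m) * (z - m) * hypTerm a z N m := by
  have hcast : (m : ℤ) + 1 = (m + 1 : ℕ) := by push_cast; rfl
  have ha := add_one_mul_gbinom_add_one a m
  have hz := add_one_mul_gbinom_add_one z m
  have hN := add_one_mul_gbinom_add_one N m
  rw [hcast] at ha hz hN
  simp only [gbinom_natCast_natCast, Int.cast_natCast] at ha hN hz
  have hN0 : (N.choose m : ℚ) ≠ 0 := by exact_mod_cast (Nat.choose_pos hm.le).ne'
  have hN1 : (N.choose (m + 1) : ℚ) ≠ 0 := by exact_mod_cast (Nat.choose_pos hm).ne'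
  simp only [hypTerm, mul_div_assoc']
  rw [div_eq_div_iff hN1 hN0]
  push_cast at ha hz hN ⊢
  linear_combination (-(m + 1) * (a.choose (m + 1) : ℚ) * gbinom z ((m : ℤ) + 1)) * hN +
    (N.choose (m + 1) : ℚ) * ((m + 1) * (a.choose (m + 1) : ℚ) * hz + (z - m) * gbinom z m * ha)

theorem neg_one_pow_mul_hypTerm {c N m : ℕ} (z : ℚ) (hcN : c ≤ N) (hmc : m ≤ c) :
    (-1) ^ m * hypTerm c z N m =
      (-1) ^ c * (gbinom z m * gbinom (c - N - 1) ((c - m : ℕ) : ℤ)) / N.choose c := by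
  have hNm : (N.choose m : ℚ) ≠ 0 := by exact_mod_cast (Nat.choose_pos (hmc.trans hcN)).ne'
  have hNc : (N.choose c : ℚ) ≠ 0 := by exact_mod_cast (Nat.choose_pos hcN).ne'
  have hchoose : (c.choose m : ℚ) / N.choose m = (N - m).choose (c - m) / N.choose c := by
    rw [div_eq_div_iff hNm hNc]
    exact_mod_cast (mul_comm _ _).trans ((Nat.choose_mul (n := N) hmc).trans (mul_comm _ _))
  have hreflect :
      gbinom (c - N - 1) ((c - m : ℕ) : ℤ) = (-1) ^ (c - m) * (N - m).choose (c - m) := by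
    rw [gbinom_eq_neg_one_pow_mul, ← gbinom_natCast_natCast, Nat.cast_sub hmc,
      Nat.cast_sub (hmc.trans hcN)]
    ring_nf
  have hsign : (-1 : ℚ) ^ c = (-1) ^ m * (-1) ^ (c - m) := by
    rw [← pow_add, Nat.add_sub_cancel' hmc]
  have hsq : (-1 : ℚ) ^ (c - m) * (-1) ^ (c - m) = 1 := by
    rw [← mul_pow, neg_one_mul, neg_neg, one_pow]
  rw [hreflect, hsign, hypTerm]
  linear_combination (-1) ^ m * gbinom z m * hchoose -
    (-1) ^ m * gbinom z m * (N - m).choose (c - m) / N.choose c * hsq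

theorem sum_range_neg_one_pow_mul_hypTerm {c N : ℕ} (z : ℚ) (hcN : c ≤ N) :
    ∑ m ∈ range (c + 1), (-1) ^ m * hypTerm c z N m = gbinom (N - z) c / N.choose c := by
  rw [sum_congr rfl fun m hm => neg_one_pow_mul_hypTerm z hcN (mem_range_succ_iff.mp hm),
    ← sum_div, ← mul_sum, ← gbinom_add_eq_sum, gbinom_eq_neg_one_pow_mul, ← mul_assoc,
    ← mul_pow, neg_one_mul, neg_neg, one_pow, one_mul]
  congr 2
  ring

theorem eq_of_recurrence {R : Type*} [CommRing R] [IsDomain R] {p q f g : ℕ → R} {N : ℕ}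
    (hp : ∀ K < N, p K ≠ 0) (hf : ∀ K < N, p K * f (K + 1) + q K * f K = 0)
    (hg : ∀ K < N, p K * g (K + 1) + q K * g K = 0) (h0 : f 0 = g 0) :
    ∀ K ≤ N, f K = g K := by
  intro K hK
  induction K with
  | zero => exact h0
  | succ K ih =>
    have hKN : K < N := by omega
    refine mul_left_cancel₀ (hp K hKN) ?_
    linear_combination hf K hKN - hg K hKN - q K * ih hKN.le

section Euler

variable (a c : ℕ) (y : ℚ)

/-- The coefficient of `t ^ K` in `₂F₁(-a, -y; -(a+c); -t) * (1 + t) ^ (c - y)`. -/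
def eulerCoeff (K : ℕ) : ℚ :=
  ∑ j ∈ range (a + 1), hypTerm a y (a + c) j * gbinom (c - y) ((K : ℤ) - j)

/-- Zeilberger's certificate for `eulerCoeff_recurrence`. -/
def eulerCert (K j : ℕ) : ℚ :=
  j * ((a + c + 1 : ℕ) - j) * hypTerm a y (a + c) j * gbinom (c - y) ((K : ℤ) + 1 - j)

variable {a c}

theorem eulerCert_succ_sub (hc : 0 < c) (K : ℕ) {j : ℕ} (hj : j ≤ a) :
    eulerCert a c y K (j + 1) - eulerCert a c y K j =
      (K + 1) * (K - (a + c : ℕ)) *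
          (hypTerm a y (a + c) j * gbinom (c - y) ((K + 1 : ℕ) - j : ℤ)) +
        (K - c) * (K - (a + c : ℕ) + y) *
          (hypTerm a y (a + c) j * gbinom (c - y) ((K : ℤ) - j)) := by
  have hw := hypTerm_succ a y (N := a + c) (m := j) (by omega)
  have hx := add_one_mul_gbinom_add_one (c - y) (K - j)
  rw [eulerCert, eulerCert, show (K : ℤ) + 1 - (j + 1 : ℕ) = K - j by push_cast; ring]
  push_cast at hw hx ⊢
  rw [show (K : ℤ) - j + 1 = K + 1 - j by ring] at hx
  linear_combination gbinom (c - y) ((K : ℤ) - j) * hw -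
    hypTerm a y (a + c) j * (K + j - (a + c)) * hx

theorem eulerCoeff_recurrence (hc : 0 < c) (K : ℕ) :
    (K + 1) * (K - (a + c : ℕ)) * eulerCoeff a c y (K + 1) +
      (K - c) * (K - (a + c : ℕ) + y) * eulerCoeff a c y K = 0 := by
  have htel := sum_range_sub (eulerCert a c y K) (a + 1)
  rw [eulerCert, eulerCert, hypTerm_of_lt _ _ (Nat.lt_succ_self a)] at htel
  simp only [eulerCoeff, mul_sum, ← sum_add_distrib]
  rw [← sum_congr rfl fun j hj =>
    eulerCert_succ_sub y hc K (Nat.lt_succ_iff.mp (mem_range.mp hj)), htel]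
  simp

theorem eulerCoeff_zero : eulerCoeff a c y 0 = 1 := by
  rw [eulerCoeff, sum_eq_single 0]
  · simp [hypTerm_zero, gbinom_zero]
  · intro j _ hj
    rw [gbinom_of_neg _ (by omega), mul_zero]
  · simp

theorem eulerCoeff_eq_hypTerm (hc : 0 < c) :
    ∀ K ≤ a + c, eulerCoeff a c y K = hypTerm c ((a + c : ℕ) - y) (a + c) K := by
  refine eq_of_recurrence (p := fun K => (K + 1) * (K - (a + c : ℕ) : ℚ))
    (q := fun K => (K - c) * (K - (a + c : ℕ) + y)) (fun K hK => ?_)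
    (fun K _ => eulerCoeff_recurrence y hc K) (fun K hK => ?_) ?_
  · have : (K : ℚ) < (a + c : ℕ) := by exact_mod_cast hK
    exact mul_ne_zero (by positivity) (sub_neg.mpr this).ne
  · linear_combination -hypTerm_succ c ((a + c : ℕ) - y) hK
  · rw [eulerCoeff_zero, hypTerm_zero]

theorem eulerCoeff_eq_zero (hc : 0 < c) {K : ℕ} (hcK : c < K) (hK : K ≤ a + c) :
    eulerCoeff a c y K = 0 := by
  rw [eulerCoeff_eq_hypTerm y hc K hK, hypTerm_of_lt _ _ hcK]

end Euler

theorem sum_hypTerm_mul_gbinom_sub_one_eq_zero {a c : ℕ} (hc : 0 < c) (hce : Even c) :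
    ∑ j ∈ range (a + 1), hypTerm a ((a + c : ℕ) / 2) (a + c) j *
      gbinom (c - (a + c : ℕ) / 2 - 1) ((c : ℤ) - 1 - j) = 0 := by
  set y : ℚ := (a + c : ℕ) / 2
  have hy : ((a + c : ℕ) : ℚ) - y = y := by ring
  have hsign : ∀ m : ℕ, (-1 : ℚ) ^ (c + 1 + m) = -(-1) ^ m := fun m => by
    rw [pow_add, pow_succ, hce.neg_one_pow]; ring
  have hchu := sum_range_neg_one_pow_mul_hypTerm (c := c) (N := a + c) y (by omega)
  rw [sum_range_succ, hy, hce.neg_one_pow, hypTerm, Nat.choose_self] at hchu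
  calc ∑ j ∈ range (a + 1), hypTerm a y (a + c) j * gbinom (c - y - 1) ((c : ℤ) - 1 - j)
      = ∑ m ∈ range c, (-1) ^ (c + 1 + m) * eulerCoeff a c y m := by
        simp only [gbinom_sub_one_eq_sum, eulerCoeff, mul_sum]
        rw [sum_comm]
        exact sum_congr rfl fun m _ => sum_congr rfl fun j _ => by ring
    _ = -∑ m ∈ range c, (-1) ^ m * hypTerm c y (a + c) m := by
        rw [← sum_neg_distrib]
        refine sum_congr rfl fun m hm => ?_
        rw [eulerCoeff_eq_hypTerm y hc m (by have := mem_range.mp hm; omega), hy, hsign]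
        ring
    _ = 0 := by
        linear_combination -hchu

theorem lemma4_general (b c : ℕ) (hc : Even c) (hcb : c < b) :
    Matrix.det (fun i j : Fin (b - c) =>
        if (i : ℕ) = 0 then
          gbinom ((c : ℚ) - (b : ℚ) / 2 - 1 / 2)
            (2 * (c : ℤ) - 1 - ((c : ℤ) + (j : ℕ)))
        else
          gbinom ((c : ℚ) - (b : ℚ) / 2 + 1 / 2)
            (((c : ℤ) + (i : ℕ)) - ((c : ℤ) + (j : ℕ)) + (c : ℤ))) = 0 := by
  rcases Nat.eq_zero_or_pos c with rfl | hc0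
  · exact Matrix.det_eq_zero_of_row_eq_zero ⟨0, by omega⟩ fun j =>
      by simpa using gbinom_of_neg _ (by omega)
  obtain ⟨a, ha⟩ : ∃ a, b - c = a + 1 := ⟨b - c - 1, by omega⟩
  have hb : (b : ℚ) / 2 = ((a + c : ℕ) : ℚ) / 2 + 1 / 2 := by
    rw [show b = a + c + 1 by omega]; push_cast; ring
  refine Matrix.exists_mulVec_eq_zero_iff.mp
    ⟨fun j => hypTerm a ((a + c : ℕ) / 2) (a + c) j, fun h => ?_, ?_⟩
  · simpa [hypTerm_zero] using congrFun h ⟨0, by omega⟩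
  ext ⟨i, hi⟩
  simp only [Matrix.mulVec, dotProduct, Pi.zero_apply, hb]
  split_ifs with hi0
  · have row := sum_hypTerm_mul_gbinom_sub_one_eq_zero (a := a) hc0 hc
    rw [← ha, Finset.sum_range] at row
    convert row using 2 with j
    rw [mul_comm]
    congr 2 <;> ring
  · have row :=
      eulerCoeff_eq_zero ((a + c : ℕ) / 2 : ℚ) hc0 (a := a) (K := c + i) (by omega) (by omega)
    rw [eulerCoeff, ← ha, Finset.sum_range] at row
    convert row using 2 with j
    rw [mul_comm]
    congr 2 <;> push_cast <;> ring

/-- Lemma 4: the determinant (3.76) vanishes.  Rows and columns are indexed by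
`c ≤ i,j < b`, realized as `i = c + i'`, `j = c + j'` with `i', j' : Fin (b-c)`. -/
theorem lemma4 (b c : ℕ) (hb : Even b) (hc : Even c) (hcb : c < b) :
    Matrix.det (fun i j : Fin (b - c) =>
        if (i : ℕ) = 0 then
          gbinom ((c : ℚ) - (b : ℚ) / 2 - 1 / 2)
            (2 * (c : ℤ) - 1 - ((c : ℤ) + (j : ℕ)))
        else
          gbinom ((c : ℚ) - (b : ℚ) / 2 + 1 / 2)
            (((c : ℤ) + (i : ℕ)) - ((c : ℤ) + (j : ℕ)) + (c : ℤ))) = 0 :=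
  lemma4_general b c hc hcb
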